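/- arXiv:1609.05471 — 4 statements merged into one kernel-verified Lean document; each statement's English description precedes it below -/
import Mathlib

section
/- For any finite poset P on {1,2,…,n}, the map Φ sending a P-forest F to the set {Λ_1^F, Λ_2^F, …, Λ_n^F} of its principal order ideals is a bijection from the set of P-forests onto the set of maximum independent sets of the graph G_P. -/
attribute [local instance] Classical.propDecidable

noncomputable section

open Finset

variable {n : ℕ}

/-- The comparability graph of the poset structure `P` on `Fin n`; for an order
ideal of `P`, connectivity of its induced subgraph in this graph agrees with
connectivity of the Hasse diagram. -/
def compGraph (P : PartialOrder (Fin n)) : SimpleGraph (Fin n) where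
  Adj i j := i ≠ j ∧ (P.le i j ∨ P.le j i)
  symm := by
    constructor
    intro i j h
    exact ⟨h.1.symm, h.2.symm⟩
  loopless := by
    constructor
    intro i h
    exact h.1 rfl

/-- `J` is an order ideal of the poset `P`. -/
def IsIdeal (P : PartialOrder (Fin n)) (J : Finset (Fin n)) : Prop :=
  ∀ i ∈ J, ∀ j : Fin n, P.le j i → j ∈ J

/-- The Hasse diagram of `J` as a subposet of `P` is a connected graph. -/
def JConn (P : PartialOrder (Fin n)) (J : Finset (Fin n)) : Prop :=
  ((compGraph P).induce (↑J : Set (Fin n))).Connected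

/-- `J` is a connected order ideal of `P`. -/
def IsConnIdeal (P : PartialOrder (Fin n)) (J : Finset (Fin n)) : Prop :=
  IsIdeal P J ∧ JConn P J

/-- The type of connected order ideals of `P` (the vertices of `G_P`). -/
abbrev ConnIdeal (P : PartialOrder (Fin n)) : Type :=
  {J : Finset (Fin n) // IsConnIdeal P J}

instance (P : PartialOrder (Fin n)) : Fintype (ConnIdeal P) := Fintype.ofFinite _

/-- `A` and `B` intersect nontrivially. -/
def Nontriv (A B : Finset (Fin n)) : Prop :=
  (A ∩ B).Nonempty ∧ ¬ A ⊆ B ∧ ¬ B ⊆ A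

/-- The graph `G_P` on the connected order ideals of `P`, with two ideals
adjacent iff they intersect nontrivially. -/
def GP (P : PartialOrder (Fin n)) : SimpleGraph (ConnIdeal P) where
  Adj A B := Nontriv A.1 B.1
  symm := by
    constructor
    intro A B h
    exact ⟨by rw [Finset.inter_comm]; exact h.1, h.2.2, h.2.1⟩
  loopless := by
    constructor
    intro A h
    exact h.2.1 (Finset.Subset.refl _)

instance (P : PartialOrder (Fin n)) : Fintype ((GP P).ConnectedComponent) :=
  Fintype.ofFinite _

instance (P : PartialOrder (Fin n)) : Fintype ((GP P).edgeSet) :=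
  Fintype.ofFinite _

/-- `s` is an independent set of the graph `G`. -/
def IsIndep {V : Type*} (G : SimpleGraph V) (s : Finset V) : Prop :=
  ∀ a ∈ s, ∀ b ∈ s, ¬ G.Adj a b

/-- `s` is a maximum independent set of the graph `G`. -/
def IsMaxIndep {V : Type*} (G : SimpleGraph V) (s : Finset V) : Prop :=
  IsIndep G s ∧ ∀ t : Finset V, IsIndep G t → t.card ≤ s.card

/-- `s` is a maximum independent set of the subgraph of `G` induced on the
vertex set `S` (e.g. on a connected component of `G`). -/
def IsMaxIndepOn {V : Type*} (G : SimpleGraph V) (S : Set V) (s : Finset V) : Prop :=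
  ↑s ⊆ S ∧ IsIndep G s ∧ ∀ t : Finset V, ↑t ⊆ S → IsIndep G t → t.card ≤ s.card

/-- `μ(M, J) = ⋃_{J' ∈ M, J' ⊊ J} J'`. -/
def mu (P : PartialOrder (Fin n)) (M : Finset (ConnIdeal P)) (J : Finset (Fin n)) :
    Finset (Fin n) :=
  (M.filter (fun J' => J'.1 ⊂ J)).biUnion (fun J' => J'.1)

/-- The strict order relation of the poset `F_M` associated with a maximum
independent set `M` of `G_P`: `i <_{F_M} j` iff `J_a ⊊ J_b` where `J_a, J_b ∈ M`
satisfy `J_a \ μ(M,J_a) = {i}` and `J_b \ μ(M,J_b) = {j}`. -/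
def FMlt (P : PartialOrder (Fin n)) (M : Finset (ConnIdeal P)) (i j : Fin n) : Prop :=
  ∃ Ja ∈ M, ∃ Jb ∈ M,
    Ja.1 \ mu P M Ja.1 = {i} ∧ Jb.1 \ mu P M Jb.1 = {j} ∧ Ja.1 ⊂ Jb.1

/-- The order relation of the poset `F_M`. -/
def FMle (P : PartialOrder (Fin n)) (M : Finset (ConnIdeal P)) (i j : Fin n) : Prop :=
  i = j ∨ FMlt P M i j

/-- Strict relation associated with the relation `le`. -/
def ltRel (le : Fin n → Fin n → Prop) (i j : Fin n) : Prop := le i j ∧ i ≠ j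

/-- `j` covers `i` in the order given by the relation `le`. -/
def CovRel (le : Fin n → Fin n → Prop) (i j : Fin n) : Prop :=
  ltRel le i j ∧ ∀ k : Fin n, ltRel le i k → ¬ ltRel le k j

/-- The principal order ideal `Λ_i = {j : j ≤ i}` of the order given by `le`. -/
def LamRel (le : Fin n → Fin n → Prop) (i : Fin n) : Finset (Fin n) :=
  Finset.univ.filter (fun j => le j i)

/-- The descent set of a forest order given by the relation `le`:
elements `i` whose parent (the element covering `i`) is smaller than `i`. -/
def DesRel (le : Fin n → Fin n → Prop) : Finset (Fin n) :=
  Finset.univ.filter (fun i => ∃ j : Fin n, CovRel le i j ∧ j < i)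

/-- `Des(M) = Des(F_M)`. -/
def DesM (P : PartialOrder (Fin n)) (M : Finset (ConnIdeal P)) : Finset (Fin n) :=
  DesRel (FMle P M)

/-- `Des(M_r, M)`. -/
def DesMr (P : PartialOrder (Fin n)) (Mr M : Finset (ConnIdeal P)) : Finset (Fin n) :=
  (DesM P M).filter (fun i => ∃ J ∈ Mr, J.1 \ mu P M J.1 = {i})

/-- `Des̄(M_r, M)`. -/
def DesBarMr (P : PartialOrder (Fin n)) (Mr M : Finset (ConnIdeal P)) :
    Finset (ConnIdeal P) :=
  Mr.filter (fun J => ∃ i ∈ DesMr P Mr M, J.1 \ mu P M J.1 = {i})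

/-- The relation `le` is (the order relation of) a `P`-forest: a partial order
whose Hasse diagram is a forest, all of whose principal order ideals are
connected order ideals of `P`, and such that for incomparable `i, j` the union
`Λ_i ∪ Λ_j` is a disconnected order ideal of `P`. -/
structure IsPForestRel (P : PartialOrder (Fin n)) (le : Fin n → Fin n → Prop) : Prop where
  refl : ∀ i, le i i
  trans : ∀ i j k, le i j → le j k → le i k
  antisymm : ∀ i j, le i j → le j i → i = j
  forest : ∀ i j k, CovRel le i j → CovRel le i k → j = k
  connIdeal : ∀ i, IsConnIdeal P (LamRel le i)
  disc : ∀ i j : Fin n, ¬ le i j → ¬ le j i →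
    IsIdeal P (LamRel le i ∪ LamRel le j) ∧ ¬ JConn P (LamRel le i ∪ LamRel le j)

/-- The principal order ideal `Λ_i^P` of `P`. -/
def PIdeal (P : PartialOrder (Fin n)) (i : Fin n) : Finset (Fin n) :=
  Finset.univ.filter (fun k => P.le k i)

/-- The generating set `gs(J)`: the maximal elements of `J` with respect to `P`. -/
def gsJ (P : PartialOrder (Fin n)) (J : Finset (Fin n)) : Finset (Fin n) :=
  J.filter (fun i => ∀ j ∈ J, ¬ P.lt i j)

/-- `P` is naturally labeled. -/
def NatLabeled (P : PartialOrder (Fin n)) : Prop :=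
  ∀ i j : Fin n, P.lt i j → i < j

/-- `U_max(M, J)`: the maximal members of `U(M,J) = {J' ∈ M : J' ⊊ J}`. -/
def Umax (P : PartialOrder (Fin n)) (M : Finset (ConnIdeal P)) (J : Finset (Fin n)) :
    Finset (ConnIdeal P) :=
  (M.filter (fun Ja => Ja.1 ⊂ J)).filter
    (fun Ja => ∀ Jb ∈ M, Jb.1 ⊂ J → Jb ≠ Ja → ¬ Ja.1 ⊂ Jb.1)

/-- The set of vertices of `G_P` which are principal order ideals of `P`. -/
def PIdealSet (P : PartialOrder (Fin n)) : Set (ConnIdeal P) :=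
  {A : ConnIdeal P | ∃ i : Fin n, A.1 = PIdeal P i}

/-- The graph `H_P`: the subgraph of `G_P` induced by the principal order ideals. -/
def HP (P : PartialOrder (Fin n)) : SimpleGraph (PIdealSet P) :=
  (GP P).induce (PIdealSet P)

/-- `f` is a `P`-partition. -/
def IsPPartition (P : PartialOrder (Fin n)) (f : Fin n → ℕ) : Prop :=
  (∀ i j : Fin n, P.lt i j → f j ≤ f i) ∧
  (∀ i j : Fin n, P.lt i j → j < i → f j < f i)

/-- The monomial `∏_{k ∈ J} x_k`. -/
def xJ (J : Finset (Fin n)) : MvPowerSeries (Fin n) ℚ :=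
  ∏ k ∈ J, MvPowerSeries.X k

/-- The set of linear extensions of `P`, viewed as permutations `w` of `Fin n`
(in positions `0, …, n-1`) such that `i < j` whenever `w i <_P w j`. -/
def LinExts (P : PartialOrder (Fin n)) : Finset (Equiv.Perm (Fin n)) :=
  Finset.univ.filter (fun w => ∀ i j : Fin n, P.lt (w i) (w j) → i < j)

/-- The major index of a permutation (with 1-indexed positions). -/
def maj (w : Equiv.Perm (Fin n)) : ℕ :=
  ∑ i ∈ Finset.univ.filter
      (fun i : Fin n => ∃ h : (i : ℕ) + 1 < n, w ⟨(i : ℕ) + 1, h⟩ < w i),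
    ((i : ℕ) + 1)

/-- The finset of maximum independent sets of the connected component `c` of `G_P`. -/
def MaxIndepsOn (P : PartialOrder (Fin n)) (c : (GP P).ConnectedComponent) :
    Finset (Finset (ConnIdeal P)) :=
  Finset.univ.filter (fun Mr : Finset (ConnIdeal P) => IsMaxIndepOn (GP P) c.supp Mr)

/-!
An independent set `M` of `G_P` is a laminar family of connected ideals. Every `J ∈ M` keeps a
nonempty leftover `J \ μ(M, J)`, and leftovers of distinct members are disjoint, so `|M| ≤ n`;
a linear extension of `P` yields an independent set of size `n`. So the maximum independent sets
are those of size `n`, and there the leftovers are singletons `{i}` partitioning `{1, …, n}`: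
ordering each `i` by inclusion of the member with leftover `{i}` inverts `Φ`.
-/

namespace SimpleGraph

variable {V : Type*} [DecidableEq V] (G : SimpleGraph V)

lemma exists_maximal_connected_finset (T : Finset V) {i : V} (hi : i ∈ T) :
    ∃ C ⊆ T, i ∈ C ∧ (G.induce (C : Set V)).Connected ∧
      ∀ B ⊆ T, (G.induce (B : Set V)).Connected → (B ∩ C).Nonempty → B ⊆ C := by
  have hsingleton : (G.induce ((({i} : Finset V)) : Set V)).Connected := by
    rw [Finset.coe_singleton]
    exact (connected_iff _).mpr ⟨Preconnected.of_subsingleton, ⟨⟨i, rfl⟩⟩⟩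
  obtain ⟨C, hC, hmax⟩ := Finset.exists_max_image
    (T.powerset.filter fun C : Finset V => i ∈ C ∧ (G.induce (C : Set V)).Connected) Finset.card
    ⟨{i}, by simpa [hi] using hsingleton⟩
  simp only [Finset.mem_filter, Finset.mem_powerset] at hC hmax
  refine ⟨C, hC.1, hC.2.1, hC.2.2, fun B hBT hB hBC => ?_⟩
  have hBC_conn : (G.induce ((B ∪ C : Finset V) : Set V)).Connected := by
    rw [Finset.coe_union]
    exact induce_union_connected hB.preconnected hC.2.2.preconnected
      (by exact_mod_cast hBC)
  have hcard := hmax (B ∪ C) ⟨Finset.union_subset hBT hC.1,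
    Finset.mem_union_right _ hC.2.1, hBC_conn⟩
  exact Finset.union_eq_right.mp
    (Finset.eq_of_superset_of_card_ge Finset.subset_union_right hcard)

end SimpleGraph

section Ideals

variable {P : PartialOrder (Fin n)} {A B J : Finset (Fin n)}

lemma IsIdeal.union (hA : IsIdeal P A) (hB : IsIdeal P B) : IsIdeal P (A ∪ B) := by
  intro x hx y hyx
  rcases mem_union.mp hx with hxA | hxB
  · exact mem_union_left _ (hA x hxA y hyx)
  · exact mem_union_right _ (hB x hxB y hyx)

lemma IsConnIdeal.nonempty (hJ : IsConnIdeal P J) : J.Nonempty := by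
  obtain ⟨⟨x, hx⟩⟩ := hJ.2.nonempty
  exact ⟨x, hx⟩

lemma JConn.union (hA : JConn P A) (hB : JConn P B) (hAB : (A ∩ B).Nonempty) :
    JConn P (A ∪ B) := by
  unfold JConn
  rw [coe_union]
  exact SimpleGraph.induce_union_connected hA.preconnected hB.preconnected
    (by exact_mod_cast hAB)

/-- Comparable elements of two disjoint ideals would have to lie in both, so no edge of the
comparability graph joins them. -/
lemma not_jConn_union (hA : IsIdeal P A) (hB : IsIdeal P B) (hAB : Disjoint A B)
    (hAne : A.Nonempty) (hBne : B.Nonempty) : ¬ JConn P (A ∪ B) := by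
  intro hconn
  obtain ⟨a, ha⟩ := hAne
  obtain ⟨b, hb⟩ := hBne
  obtain ⟨p⟩ := hconn.preconnected ⟨a, by simp [ha]⟩ ⟨b, by simp [hb]⟩
  obtain ⟨d, -, hdA, hdB⟩ :=
    p.exists_boundary_dart {x | x.1 ∈ A} ha (disjoint_right.mp hAB hb)
  have hd : d.snd.1 ∈ B := (mem_union.mp (mem_coe.mp d.snd.2)).resolve_left hdB
  rcases d.adj.2 with hle | hle
  · exact disjoint_left.mp hAB hdA (hB _ hd _ hle)
  · exact hdB (hA _ hdA _ hle)

lemma isIdeal_of_maximal_connected (hB : IsIdeal P B) (hAB : A ⊆ B)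
    (hmax : ∀ C ⊆ B, JConn P C → (C ∩ A).Nonempty → C ⊆ A) : IsIdeal P A := by
  intro x hx y hyx
  by_cases hyx' : y = x
  · exact hyx' ▸ hx
  have hpair : JConn P {y, x} := by
    unfold JConn
    rw [coe_pair]
    exact SimpleGraph.induce_pair_connected_of_adj ⟨hyx', Or.inl hyx⟩
  refine hmax {y, x} ?_ hpair ⟨x, by simp [hx]⟩ (by simp)
  exact insert_subset (hB x (hAB hx) y hyx) (singleton_subset_iff.mpr (hAB hx))

end Ideals

section IndependentSets

variable {P : PartialOrder (Fin n)} {M : Finset (ConnIdeal P)}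

lemma IsIndep.subset_or_subset (hM : IsIndep (GP P) M) {A B : ConnIdeal P} (hA : A ∈ M)
    (hB : B ∈ M) (hAB : (A.1 ∩ B.1).Nonempty) : A.1 ⊆ B.1 ∨ B.1 ⊆ A.1 := by
  refine or_iff_not_imp_left.mpr fun hAB' => ?_
  by_contra hBA
  exact hM A hA B hB ⟨hAB, hAB', hBA⟩

lemma subset_mu {A : ConnIdeal P} (hA : A ∈ M) {J : Finset (Fin n)} (hAJ : A.1 ⊂ J) :
    A.1 ⊆ mu P M J :=
  fun _ hx => mem_biUnion.mpr ⟨A, mem_filter.mpr ⟨hA, hAJ⟩, hx⟩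

/-- If `J` were covered by its proper subideals in `M`, a largest one `A` would split `J` into
the disjoint ideals `A` and `J \ A`, contradicting connectedness. -/
lemma IsIndep.sdiff_mu_nonempty (hM : IsIndep (GP P) M) (J : ConnIdeal P) :
    (J.1 \ mu P M J.1).Nonempty := by
  rw [sdiff_nonempty]
  intro hJmu
  have hbelow : (M.filter fun K => K.1 ⊂ J.1).Nonempty := by
    obtain ⟨x, hx⟩ := J.2.nonempty
    obtain ⟨K, hK, -⟩ := mem_biUnion.mp (hJmu hx)
    exact ⟨K, hK⟩
  obtain ⟨A, hA, hAmax⟩ := exists_max_image _ (fun K : ConnIdeal P => K.1.card) hbelow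
  rw [mem_filter] at hA
  have hrest : IsIdeal P (J.1 \ A.1) := by
    intro x hx y hyx
    rw [mem_sdiff] at hx ⊢
    refine ⟨J.2.1 x hx.1 y hyx, fun hyA => hx.2 ?_⟩
    obtain ⟨K, hK, hxK⟩ := mem_biUnion.mp (hJmu hx.1)
    have hyK : y ∈ K.1 := K.2.1 x hxK y hyx
    rcases hM.subset_or_subset (mem_filter.mp hK).1 hA.1 ⟨y, mem_inter.mpr ⟨hyK, hyA⟩⟩ with
      hKA | hAK
    · exact hKA hxK
    · rwa [eq_of_subset_of_card_le hAK (hAmax K hK)]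
  have hsplit := not_jConn_union A.2.1 hrest disjoint_sdiff A.2.nonempty
    (sdiff_nonempty.mpr hA.2.not_subset)
  rw [union_sdiff_of_subset hA.2.subset] at hsplit
  exact hsplit J.2.2

lemma IsIndep.disjoint_sdiff_mu (hM : IsIndep (GP P) M) {A B : ConnIdeal P} (hA : A ∈ M)
    (hB : B ∈ M) (hAB : A ≠ B) : Disjoint (A.1 \ mu P M A.1) (B.1 \ mu P M B.1) := by
  rw [disjoint_left]
  intro x hxA hxB
  rw [mem_sdiff] at hxA hxB
  have hAB' : A.1 ≠ B.1 := fun h => hAB (Subtype.ext h)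
  rcases hM.subset_or_subset hA hB ⟨x, mem_inter.mpr ⟨hxA.1, hxB.1⟩⟩ with hsub | hsub
  · exact hxB.2 (subset_mu hA (ssubset_of_subset_of_ne hsub hAB') hxA.1)
  · exact hxA.2 (subset_mu hB (ssubset_of_subset_of_ne hsub hAB'.symm) hxB.1)

lemma IsIndep.card_biUnion_sdiff_mu (hM : IsIndep (GP P) M) :
    (M.biUnion fun J => J.1 \ mu P M J.1).card = ∑ J ∈ M, (J.1 \ mu P M J.1).card :=
  card_biUnion fun _ hA _ hB hAB => hM.disjoint_sdiff_mu hA hB hAB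

lemma IsIndep.card_le_sum_card_sdiff_mu (hM : IsIndep (GP P) M) :
    M.card ≤ ∑ J ∈ M, (J.1 \ mu P M J.1).card :=
  card_eq_sum_ones M ▸ sum_le_sum fun J _ => card_pos.mpr (hM.sdiff_mu_nonempty J)

lemma IsIndep.card_le (hM : IsIndep (GP P) M) : M.card ≤ n :=
  calc M.card ≤ ∑ J ∈ M, (J.1 \ mu P M J.1).card := hM.card_le_sum_card_sdiff_mu
    _ = (M.biUnion fun J => J.1 \ mu P M J.1).card := hM.card_biUnion_sdiff_mu.symm
    _ ≤ n := card_le_univ _ |>.trans_eq (Fintype.card_fin n)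

lemma IsIndep.exists_sdiff_mu_eq_singleton (hM : IsIndep (GP P) M) (hcard : M.card = n)
    (i : Fin n) : ∃ J ∈ M, J.1 \ mu P M J.1 = {i} := by
  set L := M.biUnion fun J => J.1 \ mu P M J.1
  have hsum : ∑ J ∈ M, (J.1 \ mu P M J.1).card = n := by
    refine le_antisymm ?_ (hcard.symm.le.trans hM.card_le_sum_card_sdiff_mu)
    rw [← hM.card_biUnion_sdiff_mu]
    exact card_le_univ L |>.trans_eq (Fintype.card_fin n)
  have hone : ∀ J ∈ M, 1 = (J.1 \ mu P M J.1).card := by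
    refine (sum_eq_sum_iff_of_le fun J _ => card_pos.mpr (hM.sdiff_mu_nonempty J)).mp ?_
    rw [← card_eq_sum_ones, hsum, hcard]
  have hL : L = univ := by
    refine eq_univ_of_card L ?_
    rw [hM.card_biUnion_sdiff_mu, hsum, Fintype.card_fin]
  obtain ⟨J, hJ, hiJ⟩ := mem_biUnion.mp (hL ▸ mem_univ i)
  obtain ⟨a, ha⟩ := card_eq_one.mp (hone J hJ).symm
  rw [ha, mem_singleton] at hiJ
  exact ⟨J, hJ, hiJ ▸ ha⟩

lemma IsIndep.mem_iff_subset (hM : IsIndep (GP P) M) {J K : ConnIdeal P} (hJ : J ∈ M)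
    (hK : K ∈ M) {i : Fin n} (hKi : K.1 \ mu P M K.1 = {i}) : i ∈ J.1 ↔ K.1 ⊆ J.1 := by
  have hiK : i ∈ K.1 \ mu P M K.1 := hKi ▸ mem_singleton_self i
  rw [mem_sdiff] at hiK
  refine ⟨fun hiJ => ?_, fun hKJ => hKJ hiK.1⟩
  rcases hM.subset_or_subset hK hJ ⟨i, mem_inter.mpr ⟨hiK.1, hiJ⟩⟩ with hKJ | hJK
  · exact hKJ
  · by_contra hKJ
    exact hiK.2 (subset_mu hJ (ssubset_of_subset_not_subset hJK hKJ) hiJ)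

end IndependentSets

/-- Along a linear extension of `P`, take for each `i` the maximal connected subset containing `i`
of the initial segment ending at `i`; these `n` connected ideals are pairwise nested or
disjoint. -/
lemma exists_isIndep_card_eq (P : PartialOrder (Fin n)) :
    ∃ M : Finset (ConnIdeal P), IsIndep (GP P) M ∧ M.card = n := by
  have : IsPartialOrder (Fin n) P.le :=
    { refl := P.le_refl, trans := P.le_trans, antisymm := P.le_antisymm }
  obtain ⟨s, _, hPs⟩ := extend_partialOrder P.le
  set T : Fin n → Finset (Fin n) := fun i => univ.filter (s · i)
  have hmemT {i j : Fin n} : j ∈ T i ↔ s j i := by simp [T]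
  have hT_mono {i j : Fin n} (hji : s j i) : T j ⊆ T i :=
    fun _ hk => hmemT.mpr (trans_of s (hmemT.mp hk) hji)
  have hT_ideal (i : Fin n) : IsIdeal P (T i) :=
    fun _ hx _ hyx => hmemT.mpr (trans_of s (hPs _ _ hyx) (hmemT.mp hx))
  choose C hCT hiC hCconn hCmax using fun i =>
    (compGraph P).exists_maximal_connected_finset (T i) (hmemT.mpr (refl_of s i))
  let f (i : Fin n) : ConnIdeal P :=
    ⟨C i, isIdeal_of_maximal_connected (hT_ideal i) (hCT i) (hCmax i), hCconn i⟩
  have hnested {i j : Fin n} (hji : s j i) (hC : (C j ∩ C i).Nonempty) : C j ⊆ C i :=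
    hCmax i (C j) ((hCT j).trans (hT_mono hji)) (hCconn j) hC
  have hinj : Function.Injective f := fun i j hij => by
    have hC : C i = C j := congrArg Subtype.val hij
    exact antisymm_of s (hmemT.mp (hCT j (hC ▸ hiC i))) (hmemT.mp (hCT i (hC ▸ hiC j)))
  refine ⟨univ.image f, ?_, by rw [card_image_of_injective _ hinj, card_univ, Fintype.card_fin]⟩
  simp only [IsIndep, mem_image, mem_univ, true_and, forall_exists_index,
    forall_apply_eq_imp_iff]
  rintro i j ⟨hC, hij, hji⟩
  rcases total_of s i j with hsij | hsji
  · exact hij (hnested hsij hC)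
  · exact hji (hnested hsji (by rwa [inter_comm]))

lemma isMaxIndep_iff_card_eq {P : PartialOrder (Fin n)} {M : Finset (ConnIdeal P)} :
    IsMaxIndep (GP P) M ↔ IsIndep (GP P) M ∧ M.card = n := by
  refine ⟨fun hM => ⟨hM.1, hM.1.card_le.antisymm ?_⟩, fun hM => ⟨hM.1, fun N hN => ?_⟩⟩
  · obtain ⟨N, hN, hNcard⟩ := exists_isIndep_card_eq P
    exact hNcard.symm.le.trans (hM.2 N hN)
  · exact hN.card_le.trans hM.2.symm.le

section Forests

variable {P : PartialOrder (Fin n)} {le le' : Fin n → Fin n → Prop}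

lemma mem_lamRel {i j : Fin n} : j ∈ LamRel le i ↔ le j i := by
  simp [LamRel]

def IsPForestRel.ideals (hF : IsPForestRel P le) : Finset (ConnIdeal P) :=
  univ.image fun i => ⟨LamRel le i, hF.connIdeal i⟩

lemma IsPForestRel.lamRel_subset (hF : IsPForestRel P le) {i j : Fin n} (hij : le i j) :
    LamRel le i ⊆ LamRel le j :=
  fun k hk => mem_lamRel.mpr (hF.trans k i j (mem_lamRel.mp hk) hij)

lemma IsPForestRel.lamRel_injective (hF : IsPForestRel P le) :
    Function.Injective (LamRel le) := fun i j hij =>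
  hF.antisymm i j (mem_lamRel.mp (hij ▸ mem_lamRel.mpr (hF.refl i)))
    (mem_lamRel.mp (hij ▸ mem_lamRel.mpr (hF.refl j)))

lemma IsPForestRel.card_ideals (hF : IsPForestRel P le) : hF.ideals.card = n := by
  rw [IsPForestRel.ideals, card_image_of_injective, card_univ, Fintype.card_fin]
  exact fun i j hij => hF.lamRel_injective (congrArg Subtype.val hij)

/-- Intersecting principal ideals of incomparable elements would have a connected union. -/
lemma IsPForestRel.isIndep_ideals (hF : IsPForestRel P le) : IsIndep (GP P) hF.ideals := by
  simp only [IsPForestRel.ideals, IsIndep, mem_image, mem_univ, true_and, forall_exists_index,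
    forall_apply_eq_imp_iff]
  rintro i j ⟨hij, hnij, hnji⟩
  have hnle_ij : ¬ le i j := fun h => hnij (hF.lamRel_subset h)
  have hnle_ji : ¬ le j i := fun h => hnji (hF.lamRel_subset h)
  exact (hF.disc i j hnle_ij hnle_ji).2
    (JConn.union (hF.connIdeal i).2 (hF.connIdeal j).2 hij)

lemma IsPForestRel.lamRel_subset_of_ideals_eq (hF : IsPForestRel P le)
    (hF' : IsPForestRel P le') (h : hF.ideals = hF'.ideals) (i : Fin n) :
    LamRel le' i ⊆ LamRel le i := by
  have hmem : (⟨LamRel le i, hF.connIdeal i⟩ : ConnIdeal P) ∈ hF'.ideals :=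
    h ▸ mem_image_of_mem _ (mem_univ i)
  obtain ⟨j, -, hj⟩ := mem_image.mp hmem
  have hji : LamRel le' j = LamRel le i := congrArg Subtype.val hj
  rw [← hji]
  exact hF'.lamRel_subset (mem_lamRel.mp (hji ▸ mem_lamRel.mpr (hF.refl i)))

section Lift

variable (f : Fin n → ConnIdeal P) (hinj : Function.Injective fun i => (f i).1)

lemma lamRel_lift (hmem : ∀ i j, j ∈ (f i).1 ↔ (f j).1 ⊆ (f i).1) (i : Fin n) :
    LamRel (PartialOrder.lift (fun i => (f i).1) hinj).le i = (f i).1 := by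
  ext j
  exact mem_lamRel.trans (hmem i j).symm

lemma isPForestRel_lift (hf : IsIndep (GP P) (univ.image f))
    (hmem : ∀ i j, j ∈ (f i).1 ↔ (f j).1 ⊆ (f i).1) :
    IsPForestRel P (PartialOrder.lift (fun i => (f i).1) hinj).le := by
  set F := PartialOrder.lift (fun i => (f i).1) hinj
  have hnested (i j : Fin n) (hij : ((f i).1 ∩ (f j).1).Nonempty) :
      (f i).1 ⊆ (f j).1 ∨ (f j).1 ⊆ (f i).1 :=
    hf.subset_or_subset (mem_image_of_mem f (mem_univ i)) (mem_image_of_mem f (mem_univ j)) hij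
  have hself (i : Fin n) : i ∈ (f i).1 := (hmem i i).mpr subset_rfl
  refine ⟨F.le_refl, fun _ _ _ => F.le_trans _ _ _, F.le_antisymm, ?_, ?_, ?_⟩
  · intro i j k hj hk
    by_contra hjk
    have hi : i ∈ (f j).1 ∩ (f k).1 := mem_inter.mpr ⟨hj.1.1 (hself i), hk.1.1 (hself i)⟩
    rcases hnested j k ⟨i, hi⟩ with hsub | hsub
    · exact hk.2 j hj.1 ⟨hsub, hjk⟩
    · exact hj.2 k hk.1 ⟨hsub, Ne.symm hjk⟩
  · intro i
    rw [lamRel_lift f hinj hmem]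
    exact (f i).2
  · intro i j hij hji
    rw [lamRel_lift f hinj hmem, lamRel_lift f hinj hmem]
    have hdisj : Disjoint (f i).1 (f j).1 := by
      rw [disjoint_iff_inter_eq_empty, ← not_nonempty_iff_eq_empty]
      exact fun h => (hnested i j h).elim hij hji
    exact ⟨(f i).2.1.union (f j).2.1,
      not_jConn_union (f i).2.1 (f j).2.1 hdisj ⟨i, hself i⟩ ⟨j, hself j⟩⟩

end Lift

lemma IsIndep.exists_pForest_ideals_eq {M : Finset (ConnIdeal P)} (hM : IsIndep (GP P) M)
    (hcard : M.card = n) : ∃ F : {F : PartialOrder (Fin n) // IsPForestRel P F.le},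
      F.2.ideals = M := by
  choose f hfM hf using hM.exists_sdiff_mu_eq_singleton hcard
  have hinj : Function.Injective fun i => (f i).1 := fun i j hij => by
    have hfij : f i = f j := Subtype.ext hij
    apply singleton_injective
    rw [← hf i, ← hf j, hfij]
  have hmem (i j : Fin n) : j ∈ (f i).1 ↔ (f j).1 ⊆ (f i).1 :=
    hM.mem_iff_subset (hfM i) (hfM j) (hf j)
  have himage : univ.image f = M := by
    refine eq_of_subset_of_card_le (image_subset_iff.mpr fun i _ => hfM i) ?_
    rw [hcard, card_image_of_injective _ fun i j hij => hinj (congrArg Subtype.val hij),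
      card_univ, Fintype.card_fin]
  refine ⟨⟨PartialOrder.lift (fun i => (f i).1) hinj, isPForestRel_lift f hinj (himage ▸ hM) hmem⟩, ?_⟩
  exact (image_congr fun i _ => Subtype.ext (lamRel_lift f hinj hmem i)).trans himage

end Forests

/-- Theorem 1.1: the map `Φ` sending a `P`-forest `F` to the
set of its principal order ideals `{Λ_1^F, …, Λ_n^F}` is a bijection from the
set of `P`-forests onto the set of maximum independent sets of `G_P`. -/
theorem statement_0 (n : ℕ) (P : PartialOrder (Fin n)) :
    Set.BijOn
      (fun F : {F : PartialOrder (Fin n) // IsPForestRel P F.le} =>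
        Finset.univ.image
          (fun i : Fin n => (⟨LamRel F.1.le i, F.2.connIdeal i⟩ : ConnIdeal P)))
      Set.univ
      {M : Finset (ConnIdeal P) | IsMaxIndep (GP P) M} := by
  refine ⟨fun F _ => ?_, fun F _ F' _ hFF' => ?_, fun M hM => ?_⟩
  · exact isMaxIndep_iff_card_eq.mpr ⟨F.2.isIndep_ideals, F.2.card_ideals⟩
  · have hlam (i : Fin n) : LamRel F.1.le i = LamRel F'.1.le i :=
      (F'.2.lamRel_subset_of_ideals_eq F.2 hFF'.symm i).antisymm
        (F.2.lamRel_subset_of_ideals_eq F'.2 hFF' i)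
    exact Subtype.ext (PartialOrder.ext fun i j => by
      rw [← mem_lamRel (le := F.1.le), hlam, mem_lamRel])
  · obtain ⟨hM, hcard⟩ := isMaxIndep_iff_card_eq.mp hM
    obtain ⟨F, hF⟩ := hM.exists_pForest_ideals_eq hcard
    exact ⟨F, trivial, hF⟩
end
end

section
/- For any finite poset P on {1,…,n}, every independent set of the graph G_P has at most n elements. -/
attribute [local instance] Classical.propDecidable

noncomputable section

open Finset

variable {n : ℕ}

/-!
A family of pairwise non-adjacent vertices of `G_P` is laminar: two of its ideals are nested or
disjoint. Every member `J` of such a family owns a point lying in none of its proper sub-members: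
otherwise a maximal proper sub-member `J₀` would be closed under comparability inside `J` (an
element above a point of `J₀` lies in a sub-member meeting, hence nested with, `J₀`), contradicting
the connectedness of `J`. Distinct members own distinct points, so there are at most `n` of them.
-/

theorem SimpleGraph.subset_of_induce_connected {V : Type*} {G : SimpleGraph V} {S T : Set V}
    (hS : (G.induce S).Connected) {x : V} (hxS : x ∈ S) (hxT : x ∈ T)
    (hT : ∀ y ∈ S, ∀ z ∈ S, y ∈ T → G.Adj y z → z ∈ T) : S ⊆ T := by
  intro z hzS
  by_contra hzT
  obtain ⟨w⟩ := hS.preconnected ⟨x, hxS⟩ ⟨z, hzS⟩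
  obtain ⟨d, -, hd_fst, hd_snd⟩ := w.exists_boundary_dart {u | u.1 ∈ T} hxT hzT
  exact hd_snd (hT _ d.fst.2 _ d.snd.2 hd_fst d.adj)

variable {P : PartialOrder (Fin n)}

theorem JConn.nonempty {J : Finset (Fin n)} (hJ : JConn P J) : J.Nonempty := by
  obtain ⟨⟨x, hx⟩⟩ := SimpleGraph.Connected.nonempty hJ
  exact ⟨x, hx⟩

theorem JConn.subset_of_upward_closed {J J₀ : Finset (Fin n)} (hJ : JConn P J)
    (hJ₀ : IsIdeal P J₀) (hsub : J₀ ⊆ J) (hne : J₀.Nonempty)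
    (hup : ∀ x ∈ J₀, ∀ y ∈ J, P.le x y → y ∈ J₀) : J ⊆ J₀ := by
  obtain ⟨x, hx⟩ := hne
  have := SimpleGraph.subset_of_induce_connected (T := (J₀ : Set (Fin n))) hJ
    (mem_coe.2 (hsub hx)) (mem_coe.2 hx) fun y _ z hz hy hyz => hyz.2.elim
      (hup y hy z hz) (hJ₀ y hy z)
  exact_mod_cast this

namespace IsIndep

variable {s : Finset (ConnIdeal P)}

theorem subset_or_subset_s5 (hs : IsIndep (GP P) s) {A B : ConnIdeal P} (hA : A ∈ s) (hB : B ∈ s)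
    (hAB : (A.1 ∩ B.1).Nonempty) : A.1 ⊆ B.1 ∨ B.1 ⊆ A.1 := by
  have : ¬ Nontriv A.1 B.1 := hs A hA B hB
  unfold Nontriv at this
  tauto

theorem exists_mem_forall_lt_not_mem (hs : IsIndep (GP P) s) (J : ConnIdeal P) :
    ∃ x ∈ J.1, ∀ J' ∈ s, J' < J → x ∉ J'.1 := by
  by_contra! hcover
  obtain ⟨x, hx⟩ := J.2.2.nonempty
  obtain ⟨J₁, hJ₁, hJ₁J, -⟩ := hcover x hx
  obtain ⟨J₀, hJ₀mem, hJ₀max⟩ :=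
    (s.filter (· < J)).exists_maximal ⟨J₁, mem_filter.2 ⟨hJ₁, hJ₁J⟩⟩
  obtain ⟨hJ₀s, hJ₀J⟩ := mem_filter.1 hJ₀mem
  have hup : ∀ x ∈ J₀.1, ∀ y ∈ J.1, P.le x y → y ∈ J₀.1 := by
    intro x hx y hy hxy
    obtain ⟨J₂, hJ₂s, hJ₂J, hyJ₂⟩ := hcover y hy
    have hxJ₂ : x ∈ J₂.1 := J₂.2.1 y hyJ₂ x hxy
    rcases hs.subset_or_subset_s5 hJ₂s hJ₀s ⟨x, mem_inter.2 ⟨hxJ₂, hx⟩⟩ with h | h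
    · exact h hyJ₂
    · exact hJ₀max (mem_filter.2 ⟨hJ₂s, hJ₂J⟩) h hyJ₂
  exact hJ₀J.not_ge (J.2.2.subset_of_upward_closed J₀.2.1 hJ₀J.le J₀.2.2.nonempty hup)

end IsIndep

/-- from the proof of Lemma 2.2: every independent set of the
graph `G_P` has at most `n` elements. -/
theorem statement_5 (n : ℕ) (P : PartialOrder (Fin n))
    (s : Finset (ConnIdeal P)) (hs : IsIndep (GP P) s) :
    s.card ≤ n := by
  choose f hf_mem hf_priv using fun J : s => hs.exists_mem_forall_lt_not_mem J.1
  have hf_inj : Function.Injective f := by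
    have key : ∀ A B : s, f A = f B → A.1.1 ⊆ B.1.1 → A = B := fun A B hAB hsub =>
      Subtype.ext <| by_contra fun hne =>
        hf_priv B A.1 A.2 (lt_of_le_of_ne hsub hne) (hAB ▸ hf_mem A)
    intro A B hAB
    rcases hs.subset_or_subset_s5 A.2 B.2 ⟨f A, mem_inter.2 ⟨hf_mem A, hAB ▸ hf_mem B⟩⟩ with h | h
    · exact key A B hAB h
    · exact (key B A hAB.symm h).symm
  simpa using Fintype.card_le_of_injective f hf_inj
end
end

section
/- Let J be a connected order ideal of P and let C be a connected subgraph of G_P such that J is not adjacent in G_P to any vertex of C. If there exists a vertex J_a of C with J_a ⊊ J, then J_b ⊊ J for every vertex J_b of C. -/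
attribute [local instance] Classical.propDecidable

noncomputable section

open Finset

variable {n : ℕ}

theorem SimpleGraph.Subgraph.Preconnected.forall_mem_of_adj_imp {V : Type*} {G : SimpleGraph V}
    {H : G.Subgraph} (hH : H.Preconnected) {p : V → Prop}
    (hstep : ∀ a ∈ H.verts, ∀ b ∈ H.verts, H.Adj a b → p a → p b)
    {a : V} (ha : a ∈ H.verts) (hpa : p a) : ∀ b ∈ H.verts, p b := by
  have hwalk : ∀ u v : H.verts, H.coe.Walk u v → p u → p v := by
    intro u v w
    induction w with
    | nil => exact id
    | cons hadj _ ih => exact fun hpu => ih (hstep _ (Subtype.prop _) _ (Subtype.prop _) hadj hpu)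
  intro b hb
  obtain ⟨w⟩ := hH ⟨a, ha⟩ ⟨b, hb⟩
  exact hwalk _ _ w hpa

theorem ssubset_of_nontriv_of_not_nontriv {A B J : Finset (Fin n)} (hAJ : A ⊂ J)
    (hAB : Nontriv A B) (hJB : ¬ Nontriv J B) : B ⊂ J := by
  obtain ⟨hmeet, hAnB, -⟩ := hAB
  have hJmeet : (J ∩ B).Nonempty := hmeet.mono (Finset.inter_subset_inter_right hAJ.subset)
  have hcomparable : J ⊆ B ∨ B ⊆ J := by
    by_contra! h
    exact hJB ⟨hJmeet, h.1, h.2⟩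
  have hBJ : B ⊆ J := hcomparable.resolve_left fun hJsubB => hAnB (hAJ.subset.trans hJsubB)
  exact hBJ.ssubset_of_ne fun hBeq => hAnB (hBeq ▸ hAJ.subset)

/-- Lemma 3.2: let `J` be a connected order ideal of `P` and
`C` a connected subgraph of `G_P` none of whose vertices is adjacent to `J`.
If some vertex `J_a` of `C` satisfies `J_a ⊊ J`, then every vertex `J_b` of `C`
satisfies `J_b ⊊ J`. -/
theorem statement_10 (n : ℕ) (P : PartialOrder (Fin n))
    (Jv : ConnIdeal P) (C : (GP P).Subgraph) (hC : C.Connected)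
    (hnadj : ∀ A ∈ C.verts, ¬ (GP P).Adj Jv A)
    (Ja : ConnIdeal P) (hJa : Ja ∈ C.verts) (hsub : Ja.1 ⊂ Jv.1) :
    ∀ Jb ∈ C.verts, Jb.1 ⊂ Jv.1 :=
  hC.preconnected.forall_mem_of_adj_imp (p := fun A => A.1 ⊂ Jv.1)
    (fun _ _ B hB hAB hA => ssubset_of_nontriv_of_not_nontriv hA (C.adj_sub hAB) (hnadj B hB))
    hJa hsub
end
end

section
/- Suppose H_P has connected components D_1, D_2, …, D_ℓ. Let 1 ≤ r < s ≤ ℓ, and let J_a, J_b be connected order ideals of P. If χ_{J_a} is a subgraph of D_r while χ_{J_b} is a subgraph of D_s, then J_a and J_b are not adjacent in G_P. -/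
attribute [local instance] Classical.propDecidable

noncomputable section

open Finset

variable {n : ℕ}

/-!
Generators `i ∈ gs(J_a)` and `j ∈ gs(J_b)` give vertices `Λ_i, Λ_j` in different components of
`H_P`, so these ideals are distinct and do not intersect nontrivially: if they meet, then
`i < j` or `j < i`. Suppose `J_a ⊄ J_b`. If some generator of `J_a` lay in `J_b`, connectivity
of `J_a` would give `u ≤ v` in `J_a` with `u` below a generator `i ∈ J_b` and `v` below a
generator `k ∉ J_b`; a generator `j ≥ i` of `J_b` satisfies `i < j`, so `j ∉ J_a`, yet `Λ_k`
and `Λ_j` meet at `u`, which forces `k ∈ J_b` or `j ∈ J_a`. Hence no generator of `J_a` lies in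
`J_b`, and symmetrically; but two generators above a common point of `J_a ∩ J_b` are
comparable, so one of them lies in the other ideal.
-/

section

variable {P : PartialOrder (Fin n)}

lemma mem_pIdeal {i k : Fin n} : k ∈ PIdeal P i ↔ P.le k i := by
  simp [PIdeal]

lemma isConnIdeal_pIdeal (i : Fin n) : IsConnIdeal P (PIdeal P i) := by
  let _ := P
  have hi : i ∈ (↑(PIdeal P i) : Set (Fin n)) := mem_pIdeal.2 le_rfl
  have : Nonempty (↑(PIdeal P i) : Set (Fin n)) := ⟨⟨i, hi⟩⟩
  refine ⟨fun a ha b hba => mem_pIdeal.2 (hba.trans (mem_pIdeal.1 ha)), ?_⟩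
  have reach_top :
      ∀ w, ((compGraph P).induce (↑(PIdeal P i) : Set (Fin n))).Reachable w ⟨i, hi⟩ := by
    intro w
    by_cases hw : w = ⟨i, hi⟩
    · rw [hw]
    · exact SimpleGraph.Adj.reachable ⟨fun h => hw (Subtype.ext h), Or.inl (mem_pIdeal.1 w.2)⟩
  exact ⟨fun u v => (reach_top u).trans (reach_top v).symm⟩

lemma mem_gsJ {J : Finset (Fin n)} {i : Fin n} :
    i ∈ gsJ P J ↔ i ∈ J ∧ ∀ j ∈ J, ¬ P.lt i j :=
  Finset.mem_filter

lemma exists_mem_gsJ_le {J : Finset (Fin n)} {x : Fin n} (hx : x ∈ J) :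
    ∃ i ∈ gsJ P J, P.le x i := by
  let _ := P
  obtain ⟨i, hxi, hi⟩ := J.exists_le_maximal hx
  exact ⟨i, mem_gsJ.2 ⟨hi.1, fun j hj => hi.not_gt hj⟩, hxi⟩

lemma JConn.exists_le_of_mem_of_not_mem {J : Finset (Fin n)} (hJ : JConn P J) {S : Set (Fin n)}
    (hS : ∀ u ∈ S, ∀ v, P.le v u → v ∈ S) {x y : Fin n} (hxJ : x ∈ J) (hyJ : y ∈ J)
    (hxS : x ∈ S) (hyS : y ∉ S) :
    ∃ u ∈ S, ∃ v ∈ J, v ∉ S ∧ P.le u v := by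
  obtain ⟨w⟩ := hJ.preconnected ⟨x, hxJ⟩ ⟨y, hyJ⟩
  obtain ⟨d, -, hu, hv⟩ := w.exists_boundary_dart {z | z.1 ∈ S} hxS hyS
  obtain ⟨-, hle | hge⟩ := d.adj
  · exact ⟨_, hu, _, d.snd.2, hv, hle⟩
  · exact absurd (hS _ hu _ hge) hv

def StrictlyNestedGens (P : PartialOrder (Fin n)) (A B : Finset (Fin n)) : Prop :=
  ∀ i ∈ gsJ P A, ∀ j ∈ gsJ P B,
    (PIdeal P i ∩ PIdeal P j).Nonempty → P.lt i j ∨ P.lt j i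

lemma StrictlyNestedGens.symm {A B : Finset (Fin n)} (h : StrictlyNestedGens P A B) :
    StrictlyNestedGens P B A :=
  fun j hj i hi hji => (h i hi j hj (by rwa [Finset.inter_comm])).symm

lemma StrictlyNestedGens.not_mem_of_mem_gsJ {A B : Finset (Fin n)}
    (h : StrictlyNestedGens P A B) (hA : IsConnIdeal P A) (hB : IsIdeal P B) (hAB : ¬ A ⊆ B) :
    ∀ i ∈ gsJ P A, i ∉ B := by
  let _ := P
  intro i₀ hi₀ hi₀B
  obtain ⟨a, haA, haB⟩ := Finset.not_subset.1 hAB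
  obtain ⟨i₁, hi₁, hai₁⟩ := exists_mem_gsJ_le haA
  let S : Set (Fin n) := {u | ∃ i ∈ gsJ P A, i ∈ B ∧ P.le u i}
  have hS : ∀ u ∈ S, ∀ v, P.le v u → v ∈ S :=
    fun u ⟨i, hi, hiB, hui⟩ v hvu => ⟨i, hi, hiB, hvu.trans hui⟩
  have hi₁S : i₁ ∉ S := fun ⟨i, _, hiB, hi₁i⟩ => haB (hB i hiB a (hai₁.trans hi₁i))
  obtain ⟨u, ⟨i, hi, hiB, hui⟩, v, hvA, hvS, huv⟩ := hA.2.exists_le_of_mem_of_not_mem hS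
    (mem_gsJ.1 hi₀).1 (mem_gsJ.1 hi₁).1 ⟨i₀, hi₀, hi₀B, le_rfl⟩ hi₁S
  obtain ⟨k, hk, hvk⟩ := exists_mem_gsJ_le hvA
  have hkB : k ∉ B := fun hkB => hvS ⟨k, hk, hkB, hvk⟩
  obtain ⟨j, hj, hij⟩ := exists_mem_gsJ_le hiB
  have hjA : j ∉ A := by
    intro hjA
    rcases h i hi j hj ⟨i, by simp [mem_pIdeal, hij]⟩ with hlt | hlt
    · exact (mem_gsJ.1 hi).2 j hjA hlt
    · exact hlt.not_ge hij
  rcases h k hk j hj ⟨u, by simp [mem_pIdeal, huv.trans hvk, hui.trans hij]⟩ with hlt | hlt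
  · exact hkB (hB j (mem_gsJ.1 hj).1 k hlt.le)
  · exact hjA (hA.1 k (mem_gsJ.1 hk).1 j hlt.le)

lemma StrictlyNestedGens.not_nontriv {A B : Finset (Fin n)} (h : StrictlyNestedGens P A B)
    (hA : IsConnIdeal P A) (hB : IsConnIdeal P B) : ¬ Nontriv A B := by
  rintro ⟨⟨x, hx⟩, hAB, hBA⟩
  obtain ⟨hxA, hxB⟩ := Finset.mem_inter.1 hx
  obtain ⟨i, hi, hxi⟩ := exists_mem_gsJ_le hxA
  obtain ⟨j, hj, hxj⟩ := exists_mem_gsJ_le hxB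
  rcases h i hi j hj ⟨x, by simp [mem_pIdeal, hxi, hxj]⟩ with hlt | hlt
  · exact h.not_mem_of_mem_gsJ hA hB.1 hAB i hi (hB.1 j (mem_gsJ.1 hj).1 i hlt.le)
  · exact h.symm.not_mem_of_mem_gsJ hB hA.1 hBA j hj (hA.1 i (mem_gsJ.1 hi).1 j hlt.le)

lemma lt_or_lt_of_pIdeal_ne {i j : Fin n} (hne : PIdeal P i ≠ PIdeal P j)
    (hij : ¬ Nontriv (PIdeal P i) (PIdeal P j)) (hmeet : (PIdeal P i ∩ PIdeal P j).Nonempty) :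
    P.lt i j ∨ P.lt j i := by
  let _ := P
  have hle : ∀ {a b : Fin n}, PIdeal P a ⊆ PIdeal P b → P.le a b :=
    fun h => mem_pIdeal.1 (h (mem_pIdeal.2 le_rfl))
  have hij' : i ≠ j := fun h => hne (h ▸ rfl)
  by_cases hsub : PIdeal P i ⊆ PIdeal P j
  · exact Or.inl ((hle hsub).lt_of_ne hij')
  · exact Or.inr ((hle (not_not.1 fun h => hij ⟨hmeet, hsub, h⟩)).lt_of_ne hij'.symm)

def pIdealVertex (P : PartialOrder (Fin n)) (i : Fin n) : PIdealSet P :=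
  ⟨⟨PIdeal P i, isConnIdeal_pIdeal i⟩, i, rfl⟩

lemma strictlyNestedGens_of_connectedComponent_ne {Da Db : (HP P).ConnectedComponent}
    (hne : Da ≠ Db) {A B : Finset (Fin n)}
    (hA : ∀ i ∈ gsJ P A, (HP P).connectedComponentMk (pIdealVertex P i) = Da)
    (hB : ∀ j ∈ gsJ P B, (HP P).connectedComponentMk (pIdealVertex P j) = Db) :
    StrictlyNestedGens P A B := by
  intro i hi j hj hmeet
  refine lt_or_lt_of_pIdeal_ne (fun h => hne ?_) (fun h => hne ?_) hmeet
  · rw [← hA i hi, ← hB j hj, pIdealVertex, pIdealVertex]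
    simp only [h]
  · rw [← hA i hi, ← hB j hj]
    exact SimpleGraph.ConnectedComponent.sound (SimpleGraph.Adj.reachable h)

end

/-- Lemma 3.3(1): if `J_a, J_b` are connected order ideals of
`P` such that `χ_{J_a}` is a subgraph of the connected component `D_a` of `H_P`
while `χ_{J_b}` is a subgraph of a different connected component `D_b`, then
`J_a` and `J_b` are not adjacent in `G_P`. -/
theorem statement_11 (n : ℕ) (P : PartialOrder (Fin n))
    (Da Db : (HP P).ConnectedComponent) (hne : Da ≠ Db)
    (Ja Jb : ConnIdeal P)
    (hJa : ∀ v : ↥(PIdealSet P), (∃ i ∈ gsJ P Ja.1, v.1.1 = PIdeal P i) →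
      (HP P).connectedComponentMk v = Da)
    (hJb : ∀ v : ↥(PIdealSet P), (∃ i ∈ gsJ P Jb.1, v.1.1 = PIdeal P i) →
      (HP P).connectedComponentMk v = Db) :
    ¬ (GP P).Adj Ja Jb :=
  (strictlyNestedGens_of_connectedComponent_ne hne (fun i hi => hJa _ ⟨i, hi, rfl⟩)
    (fun j hj => hJb _ ⟨j, hj, rfl⟩)).not_nontriv Ja.2 Jb.2
end
end
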